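/- Let n ∈ ℕ and let σ ∈ S(ℝ) be strictly monotone (for instance σ = tanh). Then S(ℝⁿ) equals the sup-norm closed linear span of the set of functions x ↦ ∏_{j=1}^m σ(a_j·x), where m ranges over nonnegative integers (the empty product being the constant function 1) and a₁, …, a_m ∈ ℝⁿ. -/

import Mathlib

open Filter Topology MeasureTheory

noncomputable section

/-- `ℝⁿ` with the Euclidean norm. -/
abbrev E (n : ℕ) := EuclideanSpace ℝ (Fin n)

/-- Closure of a set of real-valued functions with respect to the supremum
norm over the whole domain (global uniform convergence). -/
def UnifClosure {α : Type*} (S : Set (α → ℝ)) : Set (α → ℝ) :=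
  {f | ∀ ε : ℝ, 0 < ε → ∃ g ∈ S, ∀ x, |f x - g x| ≤ ε}

/-- The space `N^l_φ(ℝⁿ)` of `l`-hidden-layer neural networks (the value at
`l = 0` is a dummy). -/
def NN (φ : ℝ → ℝ) (n : ℕ) : ℕ → Set (E n → ℝ)
  | 0 => {0}
  | 1 => ↑(Submodule.span ℝ
      {f : E n → ℝ | ∃ (a : E n) (b : ℝ), f = fun x => φ ((inner ℝ a x : ℝ) + b)})
  | (l+2) => ↑(Submodule.span ℝ
      {f : E n → ℝ | ∃ g ∈ NN φ n (l+1), ∃ b : ℝ, f = fun x => φ (g x + b)})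

/-- `N^∞_φ(ℝⁿ) = ⋃_{l ≥ 1} N^l_φ(ℝⁿ)`. -/
def NNinf (φ : ℝ → ℝ) (n : ℕ) : Set (E n → ℝ) :=
  {f | ∃ l : ℕ, 1 ≤ l ∧ f ∈ NN φ n l}

/-- `C₀(ℝⁿ)`: continuous real-valued functions on `ℝⁿ` vanishing at infinity. -/
def C0 (n : ℕ) : Set (E n → ℝ) :=
  {f | Continuous f ∧ Tendsto f (cocompact (E n)) (𝓝 0)}

/-- `S(ℝ)`: continuous functions `ℝ → ℝ` with finite limits at both `−∞`
and `∞`. -/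
def SR : Set (ℝ → ℝ) :=
  {f | Continuous f ∧ (∃ L : ℝ, Tendsto f atBot (𝓝 L)) ∧
    (∃ L : ℝ, Tendsto f atTop (𝓝 L))}

/-- `S(ℝⁿ)`: the uniformly closed span of finite products
`x ↦ ∏_{j=1}^m g_j(a_j·x)` with `g_j ∈ S(ℝ)` and `a_j ∈ ℝⁿ`. -/
def SRn (n : ℕ) : Set (E n → ℝ) :=
  UnifClosure ↑(Submodule.span ℝ
    {f : E n → ℝ | ∃ (m : ℕ), 1 ≤ m ∧ ∃ (g : Fin m → ℝ → ℝ) (a : Fin m → E n),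
      (∀ j, g j ∈ SR) ∧ f = fun x => ∏ j, g j (inner ℝ (a j) x : ℝ)})

/-!
If `σ ∈ S(ℝ)` is strictly increasing, then on a large interval `[t₀, t₁]` it has a continuous
inverse, so every `g ∈ S(ℝ)` is uniformly close to `G ∘ σ` with `G` continuous (first replace `g`
by `g` composed with the clamping onto `[t₀, t₁]`, which costs little because `g` has limits at
`±∞`). Weierstrass on the bounded interval containing `σ(ℝ)` then gives `|g - P ∘ σ| ≤ ε` for a
polynomial `P`; the decreasing case follows by `t ↦ -t`. Thus every ridge function `g(a·x)` is a
uniform limit of elements of the algebra generated by the `σ(c a·x)`, which is the span of the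
`σ`-products, and since functions in `S(ℝ)` are bounded, products of such limits are limits of
products. The reverse inclusion holds because `σ ∈ S(ℝ)` and the empty product is `1 ∈ S(ℝ)`.
-/

open Set Polynomial

section UnifClosure

variable {α : Type*}

lemma subset_unifClosure (S : Set (α → ℝ)) : S ⊆ UnifClosure S :=
  fun f hf _ hε => ⟨f, hf, fun x => by simpa using hε.le⟩

lemma unifClosure_subset_unifClosure_of_subset {S T : Set (α → ℝ)} (h : S ⊆ UnifClosure T) :
    UnifClosure S ⊆ UnifClosure T := by
  intro f hf ε hε
  obtain ⟨g, hg, hfg⟩ := hf (ε / 2) (half_pos hε)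
  obtain ⟨k, hk, hgk⟩ := h hg (ε / 2) (half_pos hε)
  refine ⟨k, hk, fun x => ?_⟩
  calc |f x - k x| ≤ |f x - g x| + |g x - k x| := abs_sub_le _ _ _
    _ ≤ ε / 2 + ε / 2 := add_le_add (hfg x) (hgk x)
    _ = ε := add_halves ε

def Submodule.unifClosure (p : Submodule ℝ (α → ℝ)) : Submodule ℝ (α → ℝ) where
  carrier := UnifClosure p
  zero_mem' := subset_unifClosure _ p.zero_mem
  add_mem' := by
    intro f g hf hg ε hε
    obtain ⟨f', hf', hff'⟩ := hf (ε / 2) (half_pos hε)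
    obtain ⟨g', hg', hgg'⟩ := hg (ε / 2) (half_pos hε)
    refine ⟨f' + g', p.add_mem hf' hg', fun x => ?_⟩
    calc |(f + g) x - (f' + g') x| = |(f x - f' x) + (g x - g' x)| := by
          simp only [Pi.add_apply]; ring_nf
      _ ≤ ε / 2 + ε / 2 := (abs_add_le _ _).trans (add_le_add (hff' x) (hgg' x))
      _ = ε := add_halves ε
  smul_mem' := by
    intro c f hf ε hε
    have hc : 0 < |c| + 1 := by positivity
    obtain ⟨f', hf', hff'⟩ := hf (ε / (|c| + 1)) (div_pos hε hc)
    refine ⟨c • f', p.smul_mem c hf', fun x => ?_⟩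
    calc |(c • f) x - (c • f') x| = |c| * |f x - f' x| := by
          simp only [Pi.smul_apply, smul_eq_mul, ← mul_sub, abs_mul]
      _ ≤ (|c| + 1) * (ε / (|c| + 1)) :=
          mul_le_mul (le_add_of_nonneg_right zero_le_one) (hff' x) (abs_nonneg _) hc.le
      _ = ε := mul_div_cancel₀ ε hc.ne'

lemma span_subset_unifClosure {s : Set (α → ℝ)} {p : Submodule ℝ (α → ℝ)}
    (h : s ⊆ UnifClosure p) : (Submodule.span ℝ s : Set (α → ℝ)) ⊆ UnifClosure p :=
  Submodule.span_le (p := p.unifClosure).2 h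

lemma mul_mem_unifClosure {S : Set (α → ℝ)} (hS : ∀ f ∈ S, ∀ g ∈ S, f * g ∈ S)
    {f g : α → ℝ} (hf : f ∈ UnifClosure S) (hg : g ∈ UnifClosure S)
    {M : ℝ} (hfM : ∀ x, |f x| ≤ M) (hgM : ∀ x, |g x| ≤ M) : f * g ∈ UnifClosure S := by
  intro ε hε
  set K := |M|
  have hK : 0 < 2 * K + 1 := by positivity
  set δ := min 1 (ε / (2 * K + 1))
  have hδ : 0 < δ := lt_min one_pos (div_pos hε hK)
  obtain ⟨f', hf', hff'⟩ := hf δ hδ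
  obtain ⟨g', hg', hgg'⟩ := hg δ hδ
  refine ⟨f' * g', hS f' hf' g' hg', fun x => ?_⟩
  have hfK : |f x| ≤ K := (hfM x).trans (le_abs_self M)
  have hg'K : |g' x| ≤ K + 1 := by
    have := abs_sub_abs_le_abs_sub (g' x) (g x)
    rw [abs_sub_comm] at this
    linarith [(hgM x).trans (le_abs_self M), hgg' x, min_le_left 1 (ε / (2 * K + 1))]
  calc |(f * g) x - (f' * g') x| = |f x * (g x - g' x) + (f x - f' x) * g' x| := by
        simp only [Pi.mul_apply]; ring_nf
    _ ≤ K * δ + δ * (K + 1) := (abs_add_le _ _).trans <| by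
        rw [abs_mul, abs_mul]
        exact add_le_add (mul_le_mul hfK (hgg' x) (abs_nonneg _) (abs_nonneg _))
          (mul_le_mul (hff' x) hg'K (abs_nonneg _) hδ.le)
    _ = (2 * K + 1) * δ := by ring
    _ ≤ ε := (le_div_iff₀' hK).1 (min_le_right _ _)

end UnifClosure

section OneDimensional

lemma exists_abs_sub_comp_projIcc_le {g : ℝ → ℝ} {L₀ L₁ : ℝ} (h₀ : Tendsto g atBot (𝓝 L₀))
    (h₁ : Tendsto g atTop (𝓝 L₁)) {ε : ℝ} (hε : 0 < ε) :
    ∃ (t₀ t₁ : ℝ) (h : t₀ ≤ t₁), ∀ t, |g t - g (projIcc t₀ t₁ h t)| ≤ ε := by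
  obtain ⟨t₀, ht₀⟩ := eventually_atBot.1 (Metric.tendsto_nhds.1 h₀ (ε / 2) (half_pos hε))
  obtain ⟨T, hT⟩ := eventually_atTop.1 (Metric.tendsto_nhds.1 h₁ (ε / 2) (half_pos hε))
  have close {L s u : ℝ} (hs : dist (g s) L < ε / 2) (hu : dist (g u) L < ε / 2) :
      |g s - g u| ≤ ε := by
    rw [← Real.dist_eq]
    linarith [dist_triangle_right (g s) (g u) L]
  refine ⟨t₀, max t₀ T, le_max_left _ _, fun t => ?_⟩
  rcases le_or_gt t t₀ with ht | ht
  · rw [projIcc_of_le_left _ ht]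
    exact close (ht₀ t ht) (ht₀ t₀ le_rfl)
  rcases le_or_gt t (max t₀ T) with ht' | ht'
  · rw [projIcc_of_mem _ ⟨ht.le, ht'⟩, sub_self, abs_zero]
    exact hε.le
  · rw [projIcc_of_right_le _ ht'.le]
    exact close (hT t (le_of_max_le_right ht'.le)) (hT _ (le_max_right _ _))

lemma exists_abs_le_of_mem_SR {g : ℝ → ℝ} (hg : g ∈ SR) : ∃ M, ∀ t, |g t| ≤ M := by
  obtain ⟨hgc, ⟨L₀, h₀⟩, ⟨L₁, h₁⟩⟩ := hg
  obtain ⟨t₀, t₁, h, hclamp⟩ := exists_abs_sub_comp_projIcc_le h₀ h₁ one_pos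
  obtain ⟨C, hC⟩ := isCompact_Icc.exists_bound_of_continuousOn (hgc.continuousOn (s := Icc t₀ t₁))
  refine ⟨1 + C, fun t => ?_⟩
  have := abs_sub_abs_le_abs_sub (g t) (g (projIcc t₀ t₁ h t))
  have hCt := hC _ (projIcc t₀ t₁ h t).2
  rw [Real.norm_eq_abs] at hCt
  linarith [hclamp t]

lemma StrictMono.exists_continuous_comp_eq_projIcc {σ : ℝ → ℝ} (hσc : Continuous σ)
    (hσ : StrictMono σ) {t₀ t₁ : ℝ} (h : t₀ ≤ t₁) :
    ∃ ρ : ℝ → Icc t₀ t₁, Continuous ρ ∧ ∀ t, ρ (σ t) = projIcc t₀ t₁ h t := by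
  have hσh : σ t₀ ≤ σ t₁ := hσ.monotone h
  let f : Icc t₀ t₁ → Icc (σ t₀) (σ t₁) := fun x => ⟨σ x, hσ.monotone x.2.1, hσ.monotone x.2.2⟩
  have hf : StrictMono f := fun x y hxy => hσ hxy
  have hfs : Function.Surjective f := by
    rintro ⟨y, hy⟩
    obtain ⟨x, hx, rfl⟩ := intermediate_value_Icc h hσc.continuousOn hy
    exact ⟨⟨x, hx⟩, rfl⟩
  let e := hf.orderIsoOfSurjective f hfs
  refine ⟨fun s => e.symm (projIcc _ _ hσh s), e.symm.continuous.comp continuous_projIcc,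
    fun t => ?_⟩
  have : projIcc _ _ hσh (σ t) = f (projIcc t₀ t₁ h t) := by
    ext
    simp only [f, coe_projIcc, hσ.monotone.map_max, hσ.monotone.map_min]
  change e.symm _ = _
  rw [this]
  exact StrictMono.orderIsoOfSurjective_symm_apply_self f hf hfs _

lemma exists_polynomial_near_comp_of_strictMono {σ g : ℝ → ℝ} (hσ : σ ∈ SR)
    (hmono : StrictMono σ) (hg : g ∈ SR) {ε : ℝ} (hε : 0 < ε) :
    ∃ P : ℝ[X], ∀ t, |g t - P.eval (σ t)| ≤ ε := by
  obtain ⟨hσc, ⟨A, hA⟩, ⟨B, hB⟩⟩ := hσ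
  obtain ⟨hgc, ⟨L₀, h₀⟩, ⟨L₁, h₁⟩⟩ := hg
  obtain ⟨t₀, t₁, h, hclamp⟩ := exists_abs_sub_comp_projIcc_le h₀ h₁ (half_pos hε)
  obtain ⟨ρ, hρc, hρ⟩ := hmono.exists_continuous_comp_eq_projIcc hσc h
  obtain ⟨P, hP⟩ := exists_polynomial_near_of_continuousOn A B (fun s => g (ρ s))
    (hgc.comp (continuous_subtype_val.comp hρc)).continuousOn (ε / 2) (half_pos hε)
  refine ⟨P, fun t => ?_⟩
  have hσt : σ t ∈ Icc A B := ⟨hmono.monotone.le_of_tendsto hA t, hmono.monotone.ge_of_tendsto hB t⟩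
  calc |g t - P.eval (σ t)| ≤ |g t - g (ρ (σ t))| + |g (ρ (σ t)) - P.eval (σ t)| :=
        abs_sub_le _ _ _
    _ ≤ ε / 2 + ε / 2 := by
        rw [hρ, abs_sub_comm _ (P.eval _)]
        exact add_le_add (hclamp t) (hρ t ▸ hP _ hσt).le
    _ = ε := add_halves ε

lemma comp_neg_mem_SR {σ : ℝ → ℝ} (hσ : σ ∈ SR) : (fun t => σ (-t)) ∈ SR := by
  obtain ⟨hσc, ⟨A, hA⟩, ⟨B, hB⟩⟩ := hσ
  exact ⟨hσc.comp continuous_neg, ⟨B, hB.comp tendsto_neg_atBot_atTop⟩,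
    ⟨A, hA.comp tendsto_neg_atTop_atBot⟩⟩

lemma exists_polynomial_near_comp_mul {σ g : ℝ → ℝ} (hσ : σ ∈ SR)
    (hmono : StrictMono σ ∨ StrictAnti σ) (hg : g ∈ SR) {ε : ℝ} (hε : 0 < ε) :
    ∃ (P : ℝ[X]) (c : ℝ), ∀ t, |g t - P.eval (σ (c * t))| ≤ ε := by
  rcases hmono with hmono | hanti
  · obtain ⟨P, hP⟩ := exists_polynomial_near_comp_of_strictMono hσ hmono hg hε
    exact ⟨P, 1, by simpa using hP⟩
  · obtain ⟨P, hP⟩ := exists_polynomial_near_comp_of_strictMono (comp_neg_mem_SR hσ)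
      (fun _ _ hst => hanti (neg_lt_neg hst)) hg hε
    exact ⟨P, -1, by simpa using hP⟩

end OneDimensional

lemma Submonoid.coe_span_eq_coe_adjoin {R A : Type*} [CommSemiring R] [Semiring A] [Algebra R A]
    (M : Submonoid A) : (Submodule.span R (M : Set A) : Set A) = Algebra.adjoin R (M : Set A) := by
  rw [← Subalgebra.coe_toSubmodule, Algebra.adjoin_eq_span, Submonoid.closure_eq]

section RidgeProducts

variable {n : ℕ} {σ : ℝ → ℝ}

def ridgeProducts (σ : ℝ → ℝ) (n : ℕ) : Submonoid (E n → ℝ) where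
  carrier := {f | ∃ (m : ℕ) (a : Fin m → E n), f = fun x => ∏ j, σ (inner ℝ (a j) x : ℝ)}
  mul_mem' := by
    rintro _ _ ⟨m₁, a₁, rfl⟩ ⟨m₂, a₂, rfl⟩
    exact ⟨m₁ + m₂, Fin.append a₁ a₂, by ext; simp [Fin.prod_univ_add]⟩
  one_mem' := ⟨0, Fin.elim0, by ext; simp⟩

lemma comp_inner_mem_unifClosure_adjoin_ridgeProducts (hσ : σ ∈ SR)
    (hmono : StrictMono σ ∨ StrictAnti σ) {g : ℝ → ℝ} (hg : g ∈ SR) (a : E n) :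
    (fun x => g (inner ℝ a x)) ∈
      UnifClosure ↑(Algebra.adjoin ℝ (ridgeProducts σ n : Set (E n → ℝ))) := by
  intro ε hε
  obtain ⟨P, c, hP⟩ := exists_polynomial_near_comp_mul hσ hmono hg hε
  have hsingle : {fun x => σ (inner ℝ (c • a) x)} ⊆ (ridgeProducts σ n : Set (E n → ℝ)) :=
    singleton_subset_iff.2 ⟨1, fun _ => c • a, by simp⟩
  refine ⟨aeval (fun x => σ (inner ℝ (c • a) x)) P,
    Algebra.adjoin_mono hsingle (aeval_mem_adjoin_singleton _ _), fun x => ?_⟩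
  simpa [real_inner_smul_left] using hP (inner ℝ a x)

lemma prod_comp_inner_mem_unifClosure_adjoin_ridgeProducts (hσ : σ ∈ SR)
    (hmono : StrictMono σ ∨ StrictAnti σ) {ι : Type*} [Fintype ι] {g : ι → ℝ → ℝ}
    (hg : ∀ j, g j ∈ SR) (a : ι → E n) :
    (fun x => ∏ j, g j (inner ℝ (a j) x)) ∈
      UnifClosure ↑(Algebra.adjoin ℝ (ridgeProducts σ n : Set (E n → ℝ))) := by
  set p : (E n → ℝ) → Prop := fun f =>
    f ∈ UnifClosure ↑(Algebra.adjoin ℝ (ridgeProducts σ n : Set (E n → ℝ))) ∧ ∃ M, ∀ x, |f x| ≤ M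
  suffices h : p (∏ j, fun x => g j (inner ℝ (a j) x)) by simpa only [Finset.prod_fn] using h.1
  refine Finset.prod_induction _ p ?_ ⟨subset_unifClosure _ (one_mem _), 1, by simp⟩
    fun j _ => ⟨comp_inner_mem_unifClosure_adjoin_ridgeProducts hσ hmono (hg j) (a j),
      exists_abs_le_of_mem_SR (hg j) |>.imp fun _ hM _ => hM _⟩
  rintro f₁ f₂ ⟨hf₁, M₁, hM₁⟩ ⟨hf₂, M₂, hM₂⟩
  refine ⟨mul_mem_unifClosure (fun _ h _ h' => mul_mem h h') hf₁ hf₂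
    (fun x => (hM₁ x).trans (le_max_left M₁ M₂)) (fun x => (hM₂ x).trans (le_max_right M₁ M₂)),
    M₁ * M₂, fun x => ?_⟩
  rw [Pi.mul_apply, abs_mul]
  exact mul_le_mul (hM₁ x) (hM₂ x) (abs_nonneg _) ((abs_nonneg _).trans (hM₁ x))

lemma prod_comp_inner_mem_span_SR_products (hσ : σ ∈ SR) {m : ℕ} (a : Fin m → E n) :
    (fun x => ∏ j, σ (inner ℝ (a j) x)) ∈ Submodule.span ℝ
      {f : E n → ℝ | ∃ (m : ℕ), 1 ≤ m ∧ ∃ (g : Fin m → ℝ → ℝ) (a : Fin m → E n),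
        (∀ j, g j ∈ SR) ∧ f = fun x => ∏ j, g j (inner ℝ (a j) x : ℝ)} := by
  apply Submodule.subset_span
  cases m with
  | zero =>
    exact ⟨1, le_rfl, fun _ => 1, 0,
      fun _ => ⟨continuous_const, ⟨1, tendsto_const_nhds⟩, ⟨1, tendsto_const_nhds⟩⟩, by simp⟩
  | succ m => exact ⟨m + 1, m.succ_pos, fun _ => σ, a, fun _ => hσ, rfl⟩

end RidgeProducts

theorem stmt15_general (n : ℕ) (σ : ℝ → ℝ) (hσ : σ ∈ SR)
    (hmono : StrictMono σ ∨ StrictAnti σ) :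
    SRn n = UnifClosure ↑(Submodule.span ℝ
      {f : E n → ℝ | ∃ (m : ℕ) (a : Fin m → E n),
        f = fun x => ∏ j, σ (inner ℝ (a j) x : ℝ)}) := by
  change _ = UnifClosure (Submodule.span ℝ (ridgeProducts σ n : Set (E n → ℝ)) : Set (E n → ℝ))
  apply Subset.antisymm <;>
    refine unifClosure_subset_unifClosure_of_subset (span_subset_unifClosure ?_)
  · rintro _ ⟨m, -, g, a, hg, rfl⟩
    rw [Submonoid.coe_span_eq_coe_adjoin]
    exact prod_comp_inner_mem_unifClosure_adjoin_ridgeProducts hσ hmono hg a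
  · rintro _ ⟨m, a, rfl⟩
    exact subset_unifClosure _ (prod_comp_inner_mem_span_SR_products hσ a)

/-- For any strictly monotone `σ ∈ S(ℝ)` (e.g. `tanh`), `S(ℝⁿ)` equals the
uniformly closed span of the products `x ↦ ∏_{j=1}^m σ(a_j·x)`. -/
theorem stmt15 (n : ℕ) (hn : 1 ≤ n) (σ : ℝ → ℝ) (hσ : σ ∈ SR)
    (hmono : StrictMono σ ∨ StrictAnti σ) :
    SRn n = UnifClosure ↑(Submodule.span ℝ
      {f : E n → ℝ | ∃ (m : ℕ) (a : Fin m → E n),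
        f = fun x => ∏ j, σ (inner ℝ (a j) x : ℝ)}) :=
  stmt15_general n σ hσ hmono
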